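/- The image of the set {(x,y) ∈ ℝ^{n+1} × ℝ^{n+1} : |x| = 1, ⟨x,y⟩ = 0, |y| < 1} under the map (x,y) ↦ [z₀ : ⋯ : zₙ : i√(2 − Σ|zₖ|²)] (where zₖ = xₖ + iyₖ) equals Qⁿ \ Q^{n−1}, where Qⁿ = {[z] ∈ ℂP^{n+1} : Σₖ₌₀^{n+1} zₖ² = 0} is the Fermat quadric and Q^{n−1} = Qⁿ ∩ {z_{n+1} = 0}. -/

import Mathlib

/-! For `z = x + iy` one has `Σ zₖ² = |x|² − |y|² + 2i⟨x,y⟩`, and the last coordinate of the lift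
squares to `−(2 − |x|² − |y|²)`; so the lift lies on the quadric exactly when `|x| = 1` and
`⟨x,y⟩ = 0`, and its last coordinate is nonzero exactly when `|x|² + |y|² < 2`. Conversely every
`u` with `u_{n+1} ≠ 0` is a multiple of a lift: rescale it so that `Σ|uₖ|² = 2` and
`u_{n+1} ∈ i·ℝ_{>0}`, and read off `x` and `y` as real and imaginary parts. -/

open scoped BigOperators

/-- Lift to `ℂ^{n+2}` of the map `(x,y) ↦ [z₀ : ⋯ : zₙ : i√(2 − Σ|zₖ|²)]`, `zₖ = xₖ + iyₖ`. -/
noncomputable def uLift (n : ℕ) (x y : Fin (n + 1) → ℝ) : Fin (n + 2) → ℂ :=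
  Fin.snoc (fun k => (x k : ℂ) + Complex.I * (y k : ℂ))
    (Complex.I * (Real.sqrt (2 - ∑ k, (x k ^ 2 + y k ^ 2)) : ℂ))

open Complex

/-- The cone in `ℂ^{n+2}` over `Qⁿ \ Q^{n−1}`. -/
def affineQuadricCone (n : ℕ) : Set (Fin (n + 2) → ℂ) :=
  {u | ∑ k, u k ^ 2 = 0 ∧ u (Fin.last (n + 1)) ≠ 0}

theorem smul_mem_affineQuadricCone_iff {n : ℕ} {c : ℂ} (hc : c ≠ 0) {u : Fin (n + 2) → ℂ} :
    c • u ∈ affineQuadricCone n ↔ u ∈ affineQuadricCone n := by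
  simp [affineQuadricCone, mul_pow, ← Finset.mul_sum, hc]

theorem sum_ofReal_add_I_mul_sq {ι : Type*} [Fintype ι] (x y : ι → ℝ) :
    ∑ k, ((x k : ℂ) + I * y k) ^ 2
      = ((∑ k, x k ^ 2 - ∑ k, y k ^ 2 : ℝ) : ℂ) + I * ((2 * ∑ k, x k * y k : ℝ) : ℂ) := by
  push_cast
  rw [Finset.mul_sum, Finset.mul_sum, ← Finset.sum_sub_distrib, ← Finset.sum_add_distrib]
  refine Finset.sum_congr rfl fun k _ => ?_
  linear_combination (y k : ℂ) ^ 2 * I_sq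

section uLift

variable {n : ℕ} (x y : Fin (n + 1) → ℝ)

@[simp]
theorem uLift_castSucc (k : Fin (n + 1)) : uLift n x y k.castSucc = x k + I * y k := by
  simp [uLift]

@[simp]
theorem uLift_last :
    uLift n x y (Fin.last (n + 1)) = I * (√(2 - ∑ k, (x k ^ 2 + y k ^ 2)) : ℝ) := by
  simp [uLift]

theorem uLift_last_ne_zero_iff :
    uLift n x y (Fin.last (n + 1)) ≠ 0 ↔ ∑ k, (x k ^ 2 + y k ^ 2) < 2 := by
  simp [Real.sqrt_ne_zero']

theorem sum_uLift_sq (h : ∑ k, (x k ^ 2 + y k ^ 2) ≤ 2) :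
    ∑ k, uLift n x y k ^ 2
      = 2 * (((∑ k, x k ^ 2 - 1 : ℝ) : ℂ) + I * ((∑ k, x k * y k : ℝ) : ℂ)) := by
  have hsqrt : ((√(2 - ∑ k, (x k ^ 2 + y k ^ 2)) : ℝ) : ℂ) ^ 2
      = 2 - ∑ k, ((x k : ℂ) ^ 2 + (y k : ℂ) ^ 2) := by
    rw [← ofReal_pow, Real.sq_sqrt (by linarith)]
    push_cast; rfl
  rw [Fin.sum_univ_castSucc]
  simp only [uLift_castSucc, uLift_last, sum_ofReal_add_I_mul_sq, mul_pow, I_sq, hsqrt]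
  push_cast
  rw [Finset.sum_add_distrib]
  ring

theorem uLift_mem_affineQuadricCone_iff :
    uLift n x y ∈ affineQuadricCone n ↔
      ∑ k, x k ^ 2 = 1 ∧ ∑ k, x k * y k = 0 ∧ ∑ k, y k ^ 2 < 1 := by
  rw [affineQuadricCone, Set.mem_ofPred_eq, uLift_last_ne_zero_iff, Finset.sum_add_distrib]
  constructor
  · rintro ⟨hq, hlt⟩
    rw [sum_uLift_sq x y (by rw [Finset.sum_add_distrib]; exact hlt.le)] at hq
    have hre := congrArg re hq
    have him := congrArg im hq
    simp only [mul_re, mul_im, add_re, add_im, ofReal_re, ofReal_im, I_re, I_im, re_ofNat,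
      im_ofNat, zero_re, zero_im] at hre him
    refine ⟨by linarith, by linarith, by linarith⟩
  · rintro ⟨hx, hxy, hy⟩
    refine ⟨?_, by linarith⟩
    rw [sum_uLift_sq x y (by rw [Finset.sum_add_distrib]; linarith), hx, hxy]
    simp

end uLift

theorem eq_uLift_re_im {n : ℕ} {v : Fin (n + 2) → ℂ} {s : ℝ} (hs : 0 ≤ s)
    (hlast : v (Fin.last (n + 1)) = I * s) (hnorm : ∑ k, normSq (v k) = 2) :
    v = uLift n (fun k => (v k.castSucc).re) (fun k => (v k.castSucc).im) := by
  funext k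
  refine Fin.lastCases ?_ (fun i => ?_) k
  · have hsum :
        ∑ k : Fin (n + 1), ((v k.castSucc).re ^ 2 + (v k.castSucc).im ^ 2) = 2 - s ^ 2 := by
      rw [Fin.sum_univ_castSucc, hlast, normSq_mul, normSq_I, normSq_ofReal] at hnorm
      simp only [normSq_apply, ← sq] at hnorm
      linarith
    rw [uLift_last, hsum, sub_sub_cancel, Real.sqrt_sq hs, hlast]
  · rw [uLift_castSucc, mul_comm, re_add_im]

theorem exists_normalizing_smul {n : ℕ} {u : Fin (n + 2) → ℂ} (hu : u (Fin.last (n + 1)) ≠ 0) :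
    ∃ μ : ℂ, μ ≠ 0 ∧ ∃ s : ℝ, 0 ≤ s ∧ (μ • u) (Fin.last (n + 1)) = I * s ∧
      ∑ k, normSq ((μ • u) k) = 2 := by
  set a := u (Fin.last (n + 1))
  set r := ∑ k, normSq (u k)
  have hr : 0 < r :=
    (normSq_pos.2 hu).trans_le
      (Finset.single_le_sum (fun k _ => normSq_nonneg (u k)) (Finset.mem_univ _))
  set t := √(2 / r)
  have ht : t ^ 2 = 2 / r := Real.sq_sqrt (by positivity)
  have hta : ((t * ‖a‖ : ℝ) : ℂ) ≠ 0 :=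
    ofReal_ne_zero.2 (mul_ne_zero (Real.sqrt_pos.2 (by positivity)).ne' (norm_ne_zero_iff.2 hu))
  refine ⟨(t * ‖a‖ : ℝ) * I / a, div_ne_zero (mul_ne_zero hta I_ne_zero) hu, t * ‖a‖,
    by positivity, ?_, ?_⟩
  · rw [Pi.smul_apply, smul_eq_mul, div_mul_cancel₀ _ hu, mul_comm]
  · have hμ : normSq ((t * ‖a‖ : ℝ) * I / a) = t ^ 2 := by
      rw [normSq_div, normSq_mul, normSq_I, normSq_ofReal, normSq_eq_norm_sq]
      field_simp [norm_ne_zero_iff.2 hu]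
    simp only [Pi.smul_apply, smul_eq_mul, normSq_mul, ← Finset.mul_sum, hμ, ht]
    exact div_mul_cancel₀ 2 hr.ne'

theorem exists_eq_smul_uLift {n : ℕ} {u : Fin (n + 2) → ℂ} (hu : u (Fin.last (n + 1)) ≠ 0) :
    ∃ x y : Fin (n + 1) → ℝ, ∃ c : ℂ, c ≠ 0 ∧ u = c • uLift n x y := by
  obtain ⟨μ, hμ, s, hs, hlast, hnorm⟩ := exists_normalizing_smul hu
  refine ⟨fun k => ((μ • u) k.castSucc).re, fun k => ((μ • u) k.castSucc).im, μ⁻¹,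
    inv_ne_zero hμ, ?_⟩
  rw [← eq_uLift_re_im hs hlast hnorm, inv_smul_smul₀ hμ]

/-- The image of the open unit cotangent disc bundle
`{(x,y) : |x| = 1, ⟨x,y⟩ = 0, |y| < 1}` under `(x,y) ↦ [z₀ : ⋯ : zₙ : i√(2 − Σ|zₖ|²)]`
is exactly `Qⁿ \ Q^{n−1}`, where `Qⁿ = {Σ zₖ² = 0} ⊂ ℂP^{n+1}` and
`Q^{n−1} = Qⁿ ∩ {z_{n+1} = 0}` (projective points are nonzero vectors up to scalar). -/
theorem stmt_2 (n : ℕ) :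
    ∀ u : Fin (n + 2) → ℂ, u ≠ 0 →
      ((∃ x y : Fin (n + 1) → ℝ,
          (∑ k, x k ^ 2) = 1 ∧ (∑ k, x k * y k) = 0 ∧ (∑ k, y k ^ 2) < 1 ∧
          ∃ c : ℂ, c ≠ 0 ∧ u = c • uLift n x y)
        ↔ ((∑ k, u k ^ 2) = 0 ∧ u (Fin.last (n + 1)) ≠ 0)) := by
  intro u _
  change _ ↔ u ∈ affineQuadricCone n
  constructor
  · rintro ⟨x, y, hx, hxy, hy, c, hc, rfl⟩
    exact (smul_mem_affineQuadricCone_iff hc).2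
      ((uLift_mem_affineQuadricCone_iff x y).2 ⟨hx, hxy, hy⟩)
  · intro hu
    obtain ⟨x, y, c, hc, rfl⟩ := exists_eq_smul_uLift hu.2
    obtain ⟨hx, hxy, hy⟩ :=
      (uLift_mem_affineQuadricCone_iff x y).1 ((smul_mem_affineQuadricCone_iff hc).1 hu)
    exact ⟨x, y, hx, hxy, hy, c, hc, rfl⟩
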